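/- For every simple symmetric fractional hedonic game represented by a finite simple graph that is a forest (contains no cycles), the core is non-empty: there exists a partition of the vertex set that no coalition blocks. -/

import Mathlib

open Finset
open scoped Classical

variable {V : Type*} [Fintype V] [DecidableEq V]

/-- The utility of player `i` in coalition `S` in the simple symmetric fractional
hedonic game given by the graph `G`: the number of neighbors of `i` in `S`
divided by the size of `S`. -/
noncomputable def util (G : SimpleGraph V) (i : V) (S : Finset V) : ℚ :=
  ((S.filter fun j => G.Adj i j).card : ℚ) / (S.card : ℚ)

/-- A partition of the player set `V`, given by the block `part i` of each player `i`. -/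
structure GamePartition (V : Type*) [Fintype V] [DecidableEq V] where
  part : V → Finset V
  mem_part : ∀ i, i ∈ part i
  part_eq : ∀ i j, j ∈ part i → part j = part i

/-- A nonempty coalition `S` blocks `π` if every member is strictly better off in `S`. -/
def Blocks (G : SimpleGraph V) (π : GamePartition V) (S : Finset V) : Prop :=
  S.Nonempty ∧ ∀ i ∈ S, util G i (π.part i) < util G i S

/-- A partition is in the core if no nonempty coalition blocks it. -/
def InCore (G : SimpleGraph V) (π : GamePartition V) : Prop :=
  ∀ S : Finset V, ¬ Blocks G π S

/-- A nonempty coalition `S` weakly blocks `π` if every member is weakly better off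
in `S` and some member is strictly better off. -/
def WeaklyBlocks (G : SimpleGraph V) (π : GamePartition V) (S : Finset V) : Prop :=
  S.Nonempty ∧ (∀ i ∈ S, util G i (π.part i) ≤ util G i S) ∧
    ∃ j ∈ S, util G j (π.part j) < util G j S

/-- A partition is in the strict core if no nonempty coalition weakly blocks it. -/
def InStrictCore (G : SimpleGraph V) (π : GamePartition V) : Prop :=
  ∀ S : Finset V, ¬ WeaklyBlocks G π S

/-! The argument peels stars off the forest. If `G[A]` has an edge, let `u v …` be a longest
path in `G[A]`; then `u` is a leaf of `G[A]` hanging at `v`, and every other neighbour of `v` in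
`A` is either such a leaf or the third vertex of that path. Make `v` together with its `k ≥ 1`
leaves one block and recurse on the rest of `A`. In the star the centre gets `k / (k + 1)` and
each leaf `1 / (k + 1)`. A coalition `S` meeting the star cannot improve all of its members
there: if `S` misses the centre, a leaf in `S` gets nothing; if `S` misses all the leaves, the
centre has at most one neighbour in `S` and gets at most `1 / 2`; otherwise either `#S ≤ k + 1`
and the centre gets at most `(#S - 1) / #S`, or `#S > k + 1` and a leaf gets at most `1 / #S`. -/
namespace SimpleGraph

section

variable {V : Type*} {G : SimpleGraph V}

theorem IsAcyclic.exists_star_of_adj [Finite G.edgeSet] (hG : G.IsAcyclic) {a b : V}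
    (hab : G.Adj a b) :
    ∃ v, (∃ w, G.Adj v w ∧ G.neighborSet w ⊆ {v}) ∧
      {y | G.Adj v y ∧ ¬ G.neighborSet y ⊆ {v}}.Subsingleton := by
  classical
  have : Nonempty V := ⟨a⟩
  obtain ⟨u, z, p, hp, hlongest⟩ := Walk.exists_isPath_forall_isPath_length_le_length G
  cases p with
  | nil => simpa using hlongest _ _ _ (Path.singleton hab).2
  | @cons _ v _ huv q =>
    rw [Walk.cons_isPath_iff] at hp
    -- An edge leaving a neighbour of `v` off the tail `q` would either close a cycle through `q`
    -- or extend the longest path.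
    have leaf_of_notMem : ∀ y, G.Adj v y → y ∉ q.support → G.neighborSet y ⊆ {v} := by
      intro y hvy hyq x hyx
      by_contra hxv
      by_cases hxq : x ∈ q.support
      · have := hG.mem_support_of_ne_mem_support_of_adj_of_isPath (Path.singleton hvy).2
          (hp.1.takeUntil hxq) hyx (fun h => hyq (q.support_takeUntil_subset_support hxq h))
        simp only [Path.singleton, Walk.support_cons, Walk.support_nil, List.mem_cons,
          List.not_mem_nil, or_false] at this
        rcases this with rfl | rfl
        exacts [hxv rfl, G.irrefl hyx]
      · have hlonger : (Walk.cons hyx.symm (Walk.cons hvy.symm q)).IsPath := by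
          simp only [Walk.cons_isPath_iff, Walk.support_cons, List.mem_cons, not_or]
          exact ⟨⟨hp.1, hyq⟩, hyx.ne', hxq⟩
        simpa using hlongest _ _ _ hlonger
    refine ⟨v, ⟨u, huv.symm, leaf_of_notMem u huv.symm hp.2⟩, ?_⟩
    rintro y ⟨hvy, hy⟩ y' ⟨hvy', hy'⟩
    rw [hG.eq_snd_of_adj_start hp.1 hvy (not_imp_comm.mp (leaf_of_notMem y hvy) hy),
      hG.eq_snd_of_adj_start hp.1 hvy' (not_imp_comm.mp (leaf_of_notMem y' hvy') hy')]

noncomputable def leavesAt (G : SimpleGraph V) (A : Finset V) (v : V) : Finset V :=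
  {w ∈ A | G.Adj v w ∧ ∀ x ∈ A, G.Adj w x → x = v}

variable {A : Finset V} {v w : V}

theorem leavesAt_subset : G.leavesAt A v ⊆ A := filter_subset _ _

theorem adj_of_mem_leavesAt (hw : w ∈ G.leavesAt A v) : G.Adj v w := (mem_filter.1 hw).2.1

theorem eq_of_mem_leavesAt (hw : w ∈ G.leavesAt A v) {x : V} (hx : x ∈ A) (hwx : G.Adj w x) :
    x = v :=
  (mem_filter.1 hw).2.2 x hx hwx

theorem notMem_leavesAt_self : v ∉ G.leavesAt A v := fun hv =>
  G.irrefl (adj_of_mem_leavesAt hv)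

end

variable {V : Type*} [DecidableEq V] {G : SimpleGraph V}

theorem IsAcyclic.exists_leavesAt_star (hG : G.IsAcyclic) {A : Finset V}
    (hA : ∃ a ∈ A, ∃ b ∈ A, G.Adj a b) :
    ∃ v ∈ A, (G.leavesAt A v).Nonempty ∧ #({w ∈ A | G.Adj v w} \ G.leavesAt A v) ≤ 1 := by
  obtain ⟨a, ha, b, hb, hab⟩ := hA
  obtain ⟨⟨v, hv⟩, ⟨⟨w, hw⟩, hvw, hleaf⟩, hrest⟩ :=
    (hG.induce (A : Set V)).exists_star_of_adj (a := ⟨a, ha⟩) (b := ⟨b, hb⟩) hab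
  have mem_leavesAt : ∀ y (hy : y ∈ A), y ∈ G.leavesAt A v ↔
      (G.induce (A : Set V)).Adj ⟨v, hv⟩ ⟨y, hy⟩ ∧
        (G.induce (A : Set V)).neighborSet ⟨y, hy⟩ ⊆ {⟨v, hv⟩} := by
    intro y hy
    simp [leavesAt, hy, Set.subset_def, Subtype.ext_iff]
  refine ⟨v, hv, ⟨w, (mem_leavesAt w hw).2 ⟨hvw, hleaf⟩⟩, card_le_one.2 ?_⟩
  intro y hy y' hy'
  simp only [mem_sdiff, mem_filter] at hy hy'
  exact congrArg Subtype.val <|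
    @hrest ⟨y, hy.1.1⟩ ⟨hy.1.2, fun h => hy.2 ((mem_leavesAt y hy.1.1).2 ⟨hy.1.2, h⟩)⟩
      ⟨y', hy'.1.1⟩ ⟨hy'.1.2, fun h => hy'.2 ((mem_leavesAt y' hy'.1.1).2 ⟨hy'.1.2, h⟩)⟩

end SimpleGraph

section Utility

variable {V : Type*} (G : SimpleGraph V) {i : V} {S : Finset V}

theorem util_nonneg (i : V) (S : Finset V) : 0 ≤ util G i S := by
  unfold util; positivity

theorem util_eq_zero_of_forall_not_adj (h : ∀ j ∈ S, ¬ G.Adj i j) : util G i S = 0 := by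
  rw [util, filter_false_of_mem h, card_empty, Nat.cast_zero, zero_div]

theorem card_filter_adj_lt (hi : i ∈ S) : #{j ∈ S | G.Adj i j} < #S :=
  card_lt_card (filter_ssubset.2 ⟨i, hi, G.irrefl⟩)

theorem util_le_inv_card (h : #{j ∈ S | G.Adj i j} ≤ 1) : util G i S ≤ 1 / #S := by
  unfold util
  gcongr
  exact_mod_cast h

theorem util_le_half (hi : i ∈ S) (h : #{j ∈ S | G.Adj i j} ≤ 1) : util G i S ≤ 1 / 2 := by
  have hlt := card_filter_adj_lt G hi
  rcases Nat.le_one_iff_eq_zero_or_eq_one.1 h with h0 | h1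
  · rw [util, h0]; norm_num
  · calc util G i S ≤ 1 / #S := util_le_inv_card G h
      _ ≤ 1 / 2 := by gcongr; exact_mod_cast (by omega : 2 ≤ #S)

theorem util_le_of_card_le_succ {k : ℕ} (hi : i ∈ S) (hS : #S ≤ k + 1) :
    util G i S ≤ k / (k + 1) := by
  have hlt : (#{j ∈ S | G.Adj i j} : ℚ) + 1 ≤ #S := by exact_mod_cast card_filter_adj_lt G hi
  have hSk : (#S : ℚ) ≤ k + 1 := by exact_mod_cast hS
  have hS0 : (0 : ℚ) < #S := by exact_mod_cast card_pos.2 ⟨i, hi⟩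
  rw [util, div_le_div_iff₀ hS0 (by positivity)]
  nlinarith

variable [DecidableEq V] {v w : V} {L : Finset V}

theorem util_insert_self (hv : v ∉ L) (hL : ∀ w ∈ L, G.Adj v w) :
    util G v (insert v L) = #L / (#L + 1) := by
  have : {j ∈ insert v L | G.Adj v j} = L := by
    rw [filter_insert, if_neg (G.irrefl), filter_true_of_mem hL]
  rw [util, this, card_insert_of_notMem hv, Nat.cast_succ]

theorem util_insert_of_adj (hv : v ∉ L) (hwv : G.Adj w v) (hL : ∀ x ∈ L, ¬ G.Adj w x) :
    util G w (insert v L) = 1 / (#L + 1) := by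
  have : {j ∈ insert v L | G.Adj w j} = {v} := by
    rw [filter_insert, if_pos hwv, filter_false_of_mem hL, insert_empty_eq]
  simp [util, this, card_insert_of_notMem hv]

end Utility

section Core

variable {V : Type*} [DecidableEq V] {G : SimpleGraph V}

open SimpleGraph

theorem exists_util_le_util_star {A S : Finset V} {v : V} (hL : (G.leavesAt A v).Nonempty)
    (hrest : #({w ∈ A | G.Adj v w} \ G.leavesAt A v) ≤ 1) (hSA : S ⊆ A)
    (hS : ¬ Disjoint S (insert v (G.leavesAt A v))) :
    ∃ i ∈ S, i ∈ insert v (G.leavesAt A v) ∧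
      util G i S ≤ util G i (insert v (G.leavesAt A v)) := by
  set L := G.leavesAt A v
  have hk : (1 : ℚ) ≤ #L := by exact_mod_cast card_pos.2 hL
  have hcentre : util G v (insert v L) = #L / (#L + 1) :=
    util_insert_self G notMem_leavesAt_self fun _ => adj_of_mem_leavesAt
  have hleaf : ∀ w ∈ L, util G w (insert v L) = 1 / (#L + 1) := fun w hw =>
    util_insert_of_adj G notMem_leavesAt_self (adj_of_mem_leavesAt hw).symm fun x hx hwx =>
      notMem_leavesAt_self (eq_of_mem_leavesAt hw (leavesAt_subset hx) hwx ▸ hx)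
  by_cases hv : v ∈ S
  · by_cases hSL : ∃ w ∈ S, w ∈ L
    · obtain ⟨w, hwS, hwL⟩ := hSL
      rcases le_or_gt #S (#L + 1) with hsmall | hlarge
      · exact ⟨v, hv, mem_insert_self v L, hcentre ▸ util_le_of_card_le_succ G hv hsmall⟩
      · refine ⟨w, hwS, mem_insert_of_mem hwL, ?_⟩
        have hw : #{j ∈ S | G.Adj w j} ≤ 1 := card_le_one.2 fun x hx y hy => by
          simp only [mem_filter] at hx hy
          rw [eq_of_mem_leavesAt hwL (hSA hx.1) hx.2, eq_of_mem_leavesAt hwL (hSA hy.1) hy.2]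
        calc util G w S ≤ 1 / #S := util_le_inv_card G hw
          _ ≤ 1 / (#L + 1) := by gcongr; exact_mod_cast hlarge.le
          _ = util G w (insert v L) := (hleaf w hwL).symm
    · refine ⟨v, hv, mem_insert_self v L, ?_⟩
      have hv1 : #{j ∈ S | G.Adj v j} ≤ 1 := by
        refine (card_le_card fun j hj => ?_).trans hrest
        simp only [mem_filter] at hj
        exact mem_sdiff.2 ⟨mem_filter.2 ⟨hSA hj.1, hj.2⟩, fun hjL => hSL ⟨j, hj.1, hjL⟩⟩
      calc util G v S ≤ 1 / 2 := util_le_half G hv hv1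
        _ ≤ #L / (#L + 1) := by rw [div_le_div_iff₀ two_pos (by positivity)]; linarith
        _ = util G v (insert v L) := hcentre.symm
  · obtain ⟨w, hwS, hwC⟩ := not_disjoint_iff.1 hS
    have hwL : w ∈ L := (mem_insert.1 hwC).resolve_left fun h => hv (h ▸ hwS)
    refine ⟨w, hwS, hwC, ?_⟩
    rw [util_eq_zero_of_forall_not_adj G fun x hx hwx =>
      hv (eq_of_mem_leavesAt hwL (hSA hx) hwx ▸ hx)]
    exact util_nonneg G w _

def InCoreOn (G : SimpleGraph V) {A : Finset V} (P : Finpartition A) : Prop :=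
  ∀ S ⊆ A, S.Nonempty → ∃ i ∈ S, util G i S ≤ util G i (P.part i)

theorem Finpartition.part_extend_of_mem_left {A C B : Finset V} (P : Finpartition A)
    (hC : C ≠ ⊥) (hAC : Disjoint A C) (hB : A ⊔ C = B) {i : V} (hi : i ∈ A) :
    (P.extend hC hAC hB).part i = P.part i :=
  Finpartition.part_eq_of_mem _
    (by rw [Finpartition.extend_parts]; exact mem_insert_of_mem (P.part_mem.2 hi)) (P.mem_part hi)

theorem Finpartition.part_extend_of_mem_right {A C B : Finset V} (P : Finpartition A)
    (hC : C ≠ ⊥) (hAC : Disjoint A C) (hB : A ⊔ C = B) {i : V} (hi : i ∈ C) :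
    (P.extend hC hAC hB).part i = C :=
  Finpartition.part_eq_of_mem _ (by rw [Finpartition.extend_parts]; exact mem_insert_self C _) hi

theorem InCoreOn.extend {A C B : Finset V} {P : Finpartition A} (hP : InCoreOn G P)
    (hC : C ≠ ⊥) (hAC : Disjoint A C) (hB : A ⊔ C = B)
    (hCstable : ∀ S ⊆ B, ¬ Disjoint S C → ∃ i ∈ S, i ∈ C ∧ util G i S ≤ util G i C) :
    InCoreOn G (P.extend hC hAC hB) := by
  intro S hSB hS
  by_cases hSC : Disjoint S C
  · have hSA : S ⊆ A := fun i hi => by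
      have := hSB hi
      rw [← hB, sup_eq_union, mem_union] at this
      exact this.resolve_right (disjoint_left.1 hSC hi)
    obtain ⟨i, hi, hle⟩ := hP S hSA hS
    exact ⟨i, hi, by rwa [Finpartition.part_extend_of_mem_left P hC hAC hB (hSA hi)]⟩
  · obtain ⟨i, hi, hiC, hle⟩ := hCstable S hSB hSC
    exact ⟨i, hi, by rwa [Finpartition.part_extend_of_mem_right P hC hAC hB hiC]⟩

theorem SimpleGraph.IsAcyclic.exists_inCoreOn (hG : G.IsAcyclic) (A : Finset V) :
    ∃ P : Finpartition A, InCoreOn G P := by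
  induction A using Finset.strongInduction with
  | H A ih =>
    by_cases hA : ∃ a ∈ A, ∃ b ∈ A, G.Adj a b
    · obtain ⟨v, hv, hL, hrest⟩ := hG.exists_leavesAt_star hA
      set C := insert v (G.leavesAt A v)
      have hCA : C ⊆ A := insert_subset hv leavesAt_subset
      obtain ⟨P, hP⟩ := ih (A \ C) (sdiff_ssubset hCA (insert_nonempty _ _))
      exact ⟨_, hP.extend (insert_nonempty _ _).ne_empty disjoint_sdiff_self_left
        (sdiff_union_of_subset hCA) fun S hSA hSC => exists_util_le_util_star hL hrest hSA hSC⟩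
    · refine ⟨⊥, fun S hSA ⟨i, hi⟩ => ⟨i, hi, ?_⟩⟩
      rw [util_eq_zero_of_forall_not_adj G fun j hj hij => hA ⟨i, hSA hi, j, hSA hj, hij⟩]
      exact util_nonneg G i _

end Core

def Finpartition.toGamePartition (P : Finpartition (univ : Finset V)) : GamePartition V where
  part := P.part
  mem_part i := P.mem_part (mem_univ i)
  part_eq i _ hj := P.part_eq_of_mem (P.part_mem.2 (mem_univ i)) hj

theorem InCoreOn.inCore {G : SimpleGraph V} {P : Finpartition (univ : Finset V)}
    (hP : InCoreOn G P) : InCore G P.toGamePartition := by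
  rintro S ⟨hS, hblock⟩
  obtain ⟨i, hi, hle⟩ := hP S (subset_univ S) hS
  exact (hblock i hi).not_ge hle

/-- For every simple symmetric fractional hedonic game represented by a finite
simple graph that is a forest (contains no cycles), the core is non-empty. -/
theorem stmt_5 (G : SimpleGraph V) (hforest : G.IsAcyclic) :
    ∃ π : GamePartition V, InCore G π := by
  obtain ⟨P, hP⟩ := hforest.exists_inCoreOn univ
  exact ⟨P.toGamePartition, hP.inCore⟩
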